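/- arXiv:1010.5321 — 7 statements merged into one kernel-verified Lean document; each statement's English description precedes it below -/
import Mathlib

section
/- Let n ≥ 2, k > 0, and define F : ℝⁿ → ℝⁿ by F(x)_i = k · (∏_{j=i+1}^{n−1} cosh(x_j/k)) · sinh(x_i/k) for 1 ≤ i ≤ n−1, and F(x)_n = x_n − k · ∑_{j=1}^{n−1} log(cosh(x_j/k)). Then F is differentiable everywhere and the determinant of its Jacobian (total derivative) at any point x equals ∏_{i=1}^{n−1} (cosh(x_i/k))^i. -/
/-!
Computing partial derivatives along coordinate lines `t ↦ F (update x j t)`: for `i < n - 1`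
the component `F_i` depends only on `x_i, …, x_{n-2}`, and `∂F_{n-1}/∂x_{n-1} = 1`. So the
Jacobian matrix is upper triangular once the last coordinate is listed first, and its determinant
is the product of the diagonal entries
`∂F_i/∂x_i = (∏_{i<j<n-1} cosh (x_j/k)) · cosh (x_i/k)`.
The factor `cosh (x_j/k)` occurs in the rows `0, …, j`, hence with exponent `j + 1`.
-/

open MeasureTheory Real

/-- The transition map from hyperbolic orthogonal coordinates of `n`-dimensional
hyperbolic space with curvature parameter `k` to flat model coordinates:
`F(x)_i = k · (∏_{j=i+1}^{n−1} cosh(x_j/k)) · sinh(x_i/k)` for `1 ≤ i ≤ n−1`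
(here the indices are `0`-based, so the condition is `i < n-1`), and
`F(x)_n = x_n − k · ∑_{j=1}^{n−1} log(cosh(x_j/k))`. -/
noncomputable def hypOrthToFlat (n : ℕ) (k : ℝ) (x : Fin n → ℝ) : Fin n → ℝ := fun i =>
  if (i : ℕ) < n - 1 then
    k * (∏ j ∈ Finset.univ.filter (fun j : Fin n => (i : ℕ) < (j : ℕ) ∧ (j : ℕ) < n - 1),
          Real.cosh (x j / k)) * Real.sinh (x i / k)
  else
    x i - k * ∑ j ∈ Finset.univ.filter (fun j : Fin n => (j : ℕ) < n - 1),
          Real.log (Real.cosh (x j / k))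

open Finset Function

theorem Matrix.det_of_blockTriangular_of_injective {R m α : Type*} [CommRing R] [Fintype m]
    [DecidableEq m] [LinearOrder α] {M : Matrix m m R} {b : m → α} (hM : M.BlockTriangular b)
    (hb : Injective b) : M.det = ∏ i, M i i := by
  classical
  rw [hM.det, prod_image fun i _ j _ h => hb h]
  refine prod_congr rfl fun i _ => ?_
  let : Unique { a // b a = b i } := ⟨⟨⟨i, rfl⟩⟩, fun j => Subtype.ext (hb j.2)⟩
  exact det_unique _

theorem hasDerivAt_update_of_differentiableAt {𝕜 ι E : Type*} [NontriviallyNormedField 𝕜]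
    [Fintype ι] [DecidableEq ι] [NormedAddCommGroup E] [NormedSpace 𝕜 E] {f : (ι → 𝕜) → E}
    {x : ι → 𝕜} (hf : DifferentiableAt 𝕜 f x) (j : ι) :
    HasDerivAt (fun t => f (update x j t)) (fderiv 𝕜 f x (Pi.single j 1)) (x j) := by
  rw [← update_eq_self j x] at hf
  have h := hf.hasFDerivAt.comp (x j) (hasFDerivAt_update x (x j))
  rw [update_eq_self] at h
  refine h.hasDerivAt.congr_deriv ?_
  rw [ContinuousLinearMap.comp_apply]
  congr 1
  ext i
  rcases eq_or_ne i j with rfl | hij <;> simp [*]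

theorem toMatrix'_fderiv_apply_eq_deriv {𝕜 ι : Type*} [NontriviallyNormedField 𝕜]
    [Fintype ι] [DecidableEq ι] {F : (ι → 𝕜) → ι → 𝕜} {x : ι → 𝕜}
    (hF : DifferentiableAt 𝕜 F x) (i j : ι) :
    LinearMap.toMatrix' (fderiv 𝕜 F x : (ι → 𝕜) →ₗ[𝕜] ι → 𝕜) i j =
      deriv (fun t => F (update x j t) i) (x j) :=
  (hasDerivAt_pi.1 (hasDerivAt_update_of_differentiableAt hF j) i).deriv.symm

theorem Fin.prod_filter_lt_prod_mul_eq_prod_pow {M : Type*} [CommMonoid M] {n : ℕ} (m : ℕ)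
    (c : Fin n → M) :
    ∏ i ∈ univ.filter (fun i : Fin n => (i : ℕ) < m),
        (∏ j ∈ univ.filter (fun j : Fin n => (i : ℕ) < j ∧ (j : ℕ) < m), c j) * c i =
      ∏ i ∈ univ.filter (fun i : Fin n => (i : ℕ) < m), c i ^ ((i : ℕ) + 1) := by
  rw [prod_mul_distrib, prod_comm' (t' := univ.filter (fun j : Fin n => (j : ℕ) < m))
    (s' := fun j => Iio j)
    (by intro i j; simp only [mem_filter, mem_univ, true_and, mem_Iio, Fin.lt_def]; omega),
    ← prod_mul_distrib]
  refine prod_congr rfl fun j _ => ?_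
  rw [Finset.prod_const, Fin.card_Iio, pow_succ]

theorem differentiable_hypOrthToFlat (n : ℕ) (k : ℝ) :
    Differentiable ℝ (hypOrthToFlat n k) := by
  refine differentiable_pi.2 fun i => ?_
  unfold hypOrthToFlat
  split_ifs
  · fun_prop
  · fun_prop (disch := exact fun _ => (cosh_pos _).ne')

def lastFirstRank (n : ℕ) (i : Fin n) : ℕ := if (i : ℕ) < n - 1 then i + 1 else 0

theorem lastFirstRank_injective {n : ℕ} : Injective (lastFirstRank n) := by
  intro i j hij
  unfold lastFirstRank at hij
  ext
  split_ifs at hij <;> omega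

section

variable {n : ℕ} {k : ℝ} (x : Fin n → ℝ)

theorem hypOrthToFlat_update_apply_of_lt {i j : Fin n} (hi : (i : ℕ) < n - 1) (hji : j ≠ i)
    (hj : ¬((i : ℕ) < j ∧ (j : ℕ) < n - 1)) (t : ℝ) :
    hypOrthToFlat n k (update x j t) i = hypOrthToFlat n k x i := by
  simp only [hypOrthToFlat, if_pos hi, update_of_ne hji.symm]
  congr 2
  refine prod_congr rfl fun l hl => ?_
  rw [update_of_ne]
  rintro rfl
  exact hj (by simpa using hl)

theorem hypOrthToFlat_update_self_of_lt {i : Fin n} (hi : (i : ℕ) < n - 1) (t : ℝ) :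
    hypOrthToFlat n k (update x i t) i =
      k * (∏ j ∈ univ.filter (fun j : Fin n => (i : ℕ) < j ∧ (j : ℕ) < n - 1),
        cosh (x j / k)) * sinh (t / k) := by
  simp only [hypOrthToFlat, if_pos hi, update_self]
  congr 2
  refine prod_congr rfl fun l hl => ?_
  rw [update_of_ne]
  rintro rfl
  simp at hl

theorem hypOrthToFlat_update_self_of_not_lt {i : Fin n} (hi : ¬(i : ℕ) < n - 1) (t : ℝ) :
    hypOrthToFlat n k (update x i t) i =
      t - k * ∑ j ∈ univ.filter (fun j : Fin n => (j : ℕ) < n - 1), log (cosh (x j / k)) := by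
  simp only [hypOrthToFlat, if_neg hi, update_self]
  congr 2
  refine sum_congr rfl fun l hl => ?_
  rw [update_of_ne]
  rintro rfl
  exact hi (by simpa using hl)

local notation "J" =>
  LinearMap.toMatrix' (fderiv ℝ (hypOrthToFlat n k) x : (Fin n → ℝ) →ₗ[ℝ] Fin n → ℝ)

theorem toMatrix'_fderiv_hypOrthToFlat_apply_of_lt {i j : Fin n} (hi : (i : ℕ) < n - 1)
    (hji : j ≠ i) (hj : ¬((i : ℕ) < j ∧ (j : ℕ) < n - 1)) : J i j = 0 := by
  simp only [toMatrix'_fderiv_apply_eq_deriv (differentiable_hypOrthToFlat n k x),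
    hypOrthToFlat_update_apply_of_lt x hi hji hj, deriv_const]

theorem toMatrix'_fderiv_hypOrthToFlat_apply_self (hk : k ≠ 0) (i : Fin n) :
    J i i = if (i : ℕ) < n - 1 then
      (∏ j ∈ univ.filter (fun j : Fin n => (i : ℕ) < j ∧ (j : ℕ) < n - 1), cosh (x j / k)) *
        cosh (x i / k)
    else 1 := by
  rw [toMatrix'_fderiv_apply_eq_deriv (differentiable_hypOrthToFlat n k x)]
  split_ifs with hi
  · simp only [hypOrthToFlat_update_self_of_lt x hi]
    refine (((hasDerivAt_id _).div_const k).sinh.const_mul _).deriv.trans ?_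
    field_simp
  · simp only [hypOrthToFlat_update_self_of_not_lt x hi]
    exact ((hasDerivAt_id _).sub_const _).deriv

theorem blockTriangular_toMatrix'_fderiv_hypOrthToFlat :
    (J).BlockTriangular (lastFirstRank n) := by
  intro i j hij
  obtain ⟨hi, hji, hj⟩ : (i : ℕ) < n - 1 ∧ j ≠ i ∧ ¬((i : ℕ) < j ∧ (j : ℕ) < n - 1) := by
    unfold lastFirstRank at hij
    split_ifs at hij <;> refine ⟨?_, Fin.val_ne_iff.1 ?_, ?_⟩ <;> omega
  exact toMatrix'_fderiv_hypOrthToFlat_apply_of_lt x hi hji hj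

end

theorem hypOrthToFlat_differentiable_and_jacobian_general (n : ℕ) (k : ℝ) (hk : 0 < k) :
    Differentiable ℝ (hypOrthToFlat n k) ∧
      ∀ x : Fin n → ℝ,
        (fderiv ℝ (hypOrthToFlat n k) x).det =
          ∏ i ∈ Finset.univ.filter (fun i : Fin n => (i : ℕ) < n - 1),
            (Real.cosh (x i / k)) ^ ((i : ℕ) + 1) := by
  refine ⟨differentiable_hypOrthToFlat n k, fun x => ?_⟩
  rw [ContinuousLinearMap.det, ← LinearMap.det_toMatrix',
    Matrix.det_of_blockTriangular_of_injective (blockTriangular_toMatrix'_fderiv_hypOrthToFlat x)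
      lastFirstRank_injective]
  simp only [toMatrix'_fderiv_hypOrthToFlat_apply_self x hk.ne']
  rw [← prod_filter, Fin.prod_filter_lt_prod_mul_eq_prod_pow]

/-- The transition map from hyperbolic orthogonal coordinates is differentiable and its
Jacobian determinant at `x` equals `∏_{i=1}^{n−1} cosh(x_i/k)^i`
(with `0`-based indices the exponent of the `i`-th factor is `i + 1`). -/
theorem hypOrthToFlat_differentiable_and_jacobian (n : ℕ) (hn : 2 ≤ n) (k : ℝ) (hk : 0 < k) :
    Differentiable ℝ (hypOrthToFlat n k) ∧
      ∀ x : Fin n → ℝ,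
        (fderiv ℝ (hypOrthToFlat n k) x).det =
          ∏ i ∈ Finset.univ.filter (fun i : Fin n => (i : ℕ) < n - 1),
            (Real.cosh (x i / k)) ^ ((i : ℕ) + 1) :=
  hypOrthToFlat_differentiable_and_jacobian_general n k hk
end

section
/- Let n ≥ 2, k > 0, and define Φ : ℝⁿ → ℝⁿ by Φ(ξ) = (ξ_1, …, ξ_{n−1}, e^{ξ_n/k}). Then Φ is injective and for every measurable set D ⊆ ℝⁿ, ∫_D e^{−(n−1)·ξ_n/k} dξ_1 ⋯ dξ_n = k · ∫_{Φ(D)} x_n^{−n} dx_1 ⋯ dx_n. -/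
open MeasureTheory Real

/-- The transition map from paracycle (horocycle) coordinates of `n`-dimensional
hyperbolic space with curvature parameter `k` to Cartesian coordinates of the
Poincaré half-space model: `Φ(ξ) = (ξ_1, …, ξ_{n−1}, e^{ξ_n/k})`. -/
noncomputable def paracycleToHalfSpace (n : ℕ) (k : ℝ) (ξ : Fin n → ℝ) : Fin n → ℝ := fun i =>
  if (i : ℕ) < n - 1 then ξ i else Real.exp (ξ i / k)

/-!
`Φ` acts coordinatewise, so its Jacobian is diagonal with determinant `e^{ξ_n/k}/k`, and the
change of variables formula for injective differentiable maps turns `k · ∫_{Φ(D)} x_n^{-n}` into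
`∫_D k · (e^{ξ_n/k}/k) · e^{-n ξ_n/k} = ∫_D e^{-(n-1) ξ_n/k}`.
-/

section CoordinatewiseMap

open ContinuousLinearMap

variable {ι : Type*} [Fintype ι]

theorem hasFDerivAt_piMap {𝕜 : Type*} [NontriviallyNormedField 𝕜] {g : ι → 𝕜 → 𝕜} {g' : ι → 𝕜}
    {ξ : ι → 𝕜} (hg : ∀ i, HasDerivAt (g i) (g' i) (ξ i)) :
    HasFDerivAt (Pi.map g) (pi fun i ↦ (toSpanSingleton 𝕜 (g' i)).comp (proj i)) ξ :=
  hasFDerivAt_pi.2 fun i ↦ (hg i).hasFDerivAt.comp ξ (hasFDerivAt_apply i ξ)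

theorem det_pi_toSpanSingleton {𝕜 : Type*} [NontriviallyNormedField 𝕜] (d : ι → 𝕜) :
    (pi fun i ↦ (toSpanSingleton 𝕜 (d i)).comp (proj i)).det = ∏ i, d i := by
  simp only [det_pi, det_toSpanSingleton]

theorem lintegral_image_piMap {g g' : ι → ℝ → ℝ} (hg : ∀ i t, HasDerivAt (g i) (g' i t) t)
    (hinj : ∀ i, Function.Injective (g i)) {D : Set (ι → ℝ)} (hD : MeasurableSet D)
    (f : (ι → ℝ) → ENNReal) :
    ∫⁻ x in Pi.map g '' D, f x =
      ∫⁻ ξ in D, ENNReal.ofReal |∏ i, g' i (ξ i)| * f (Pi.map g ξ) := by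
  rw [lintegral_image_eq_lintegral_abs_det_fderiv_mul volume hD
    (fun ξ _ ↦ (hasFDerivAt_piMap fun i ↦ hg i (ξ i)).hasFDerivWithinAt)
    (Function.Injective.piMap hinj).injOn]
  simp only [det_pi_toSpanSingleton]

end CoordinatewiseMap

theorem Fin.prod_ite_lt_sub_one {M : Type*} [CommMonoid M] {n : ℕ} (hn : 0 < n) (c : Fin n → M) :
    ∏ i : Fin n, (if (i : ℕ) < n - 1 then 1 else c i) = c ⟨n - 1, by omega⟩ := by
  rw [Finset.prod_eq_single (⟨n - 1, by omega⟩ : Fin n)]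
  · simp
  · intro i _ hi
    rw [if_pos (by rw [Ne, Fin.ext_iff] at hi; simp at hi; omega)]
  · simp

theorem mul_exp_div_mul_inv_exp_pow {k : ℝ} (hk : k ≠ 0) (n : ℕ) (t : ℝ) :
    k * (exp (t / k) / k * (exp (t / k) ^ n)⁻¹) = exp (-((n : ℝ) - 1) * t / k) := by
  rw [← exp_nat_mul, ← exp_neg, div_mul_eq_mul_div, mul_div_assoc', mul_div_cancel_left₀ _ hk,
    ← exp_add]
  congr 1
  ring

noncomputable def paracycleCoordMap (n : ℕ) (k : ℝ) (i : Fin n) : ℝ → ℝ :=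
  if (i : ℕ) < n - 1 then id else fun t ↦ exp (t / k)

theorem paracycleToHalfSpace_eq_piMap (n : ℕ) (k : ℝ) :
    paracycleToHalfSpace n k = Pi.map (paracycleCoordMap n k) := by
  ext ξ i
  by_cases hi : (i : ℕ) < n - 1 <;> simp [paracycleToHalfSpace, paracycleCoordMap, hi]

theorem paracycleCoordMap_injective {k : ℝ} (hk : k ≠ 0) (n : ℕ) (i : Fin n) :
    Function.Injective (paracycleCoordMap n k i) := by
  unfold paracycleCoordMap
  split_ifs
  · exact Function.injective_id
  · exact fun s t hst ↦ (div_left_inj' hk).1 (exp_injective hst)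

theorem hasDerivAt_paracycleCoordMap (n : ℕ) (k : ℝ) (i : Fin n) (t : ℝ) :
    HasDerivAt (paracycleCoordMap n k i) (if (i : ℕ) < n - 1 then 1 else exp (t / k) / k) t := by
  unfold paracycleCoordMap
  split_ifs
  · exact hasDerivAt_id t
  · simpa [div_eq_mul_inv] using ((hasDerivAt_id t).div_const k).exp

/-- `Φ` is injective and for every measurable `D ⊆ ℝⁿ`,
`∫_D e^{−(n−1)·ξ_n/k} dξ = k · ∫_{Φ(D)} x_n^{−n} dx`. -/
theorem paracycleToHalfSpace_injective_and_integral (n : ℕ) (hn : 2 ≤ n) (k : ℝ) (hk : 0 < k) :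
    Function.Injective (paracycleToHalfSpace n k) ∧
      ∀ D : Set (Fin n → ℝ), MeasurableSet D →
        (∫⁻ ξ in D, ENNReal.ofReal (Real.exp (-((n : ℝ) - 1) * ξ ⟨n - 1, by omega⟩ / k))) =
          ENNReal.ofReal k *
            ∫⁻ x in (paracycleToHalfSpace n k '' D),
              ENNReal.ofReal ((x ⟨n - 1, by omega⟩ ^ n)⁻¹) := by
  have hinj := paracycleCoordMap_injective hk.ne' n
  rw [paracycleToHalfSpace_eq_piMap]
  refine ⟨.piMap hinj, fun D hD ↦ ?_⟩
  rw [lintegral_image_piMap (hasDerivAt_paracycleCoordMap n k) hinj hD,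
    ← lintegral_const_mul' _ _ ENNReal.ofReal_ne_top]
  refine lintegral_congr fun ξ ↦ ?_
  have hlast : Pi.map (paracycleCoordMap n k) ξ ⟨n - 1, by omega⟩ =
      exp (ξ ⟨n - 1, by omega⟩ / k) := by
    simp [paracycleCoordMap]
  rw [Fin.prod_ite_lt_sub_one (by omega) fun i ↦ exp (ξ i / k) / k, hlast,
    abs_of_pos (by positivity), ← ENNReal.ofReal_mul (by positivity), ← ENNReal.ofReal_mul hk.le,
    mul_exp_div_mul_inv_exp_pow hk.ne']
end

section
/- Let a, b, c > 0 be real numbers. Then ∫_0^a ∫_0^{φ(x)} ∫_0^{ψ(y)} cosh²(z) · cosh(y) dz dy dx = (1/4) · ∫_0^b (tanh(λ) · sinh(a) / √(tanh²(b)·cosh²(λ) + sinh²(a)·sinh²(λ))) · log((sinh(b) + tanh(c)·sinh(λ)) / (sinh(b) − tanh(c)·sinh(λ))) dλ, where φ(x) = artanh((tanh(b)/sinh(a))·sinh(x)) and ψ(y) = artanh((tanh(c)/sinh(b))·sinh(y)). -/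
open MeasureTheory Real intervalIntegral

/-- The inverse hyperbolic tangent, `artanh x = (1/2)·log((1+x)/(1−x))`. -/
noncomputable def artanh (x : ℝ) : ℝ := Real.log ((1 + x) / (1 - x)) / 2

/-!
The innermost integral is `∫₀^w cosh² = (w + sinh w cosh w) / 2`. With `u = k sinh y` and
`ψ y = artanh u` one has `sinh ψ cosh ψ = u / (1 - u²)` and `ψ' = k cosh y / (1 - u²)`, so the
middle integral has the closed form `∫₀^t (∫₀^{ψ y} cosh² z dz) cosh y dy = sinh t · ψ t / 2`.
In the outer integral substitute `x = arsinh ((sinh a / tanh b) tanh t)`, the inverse of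
`x ↦ artanh ((tanh b / sinh a) sinh x)`, which carries `[0, b]` onto `[0, a]`: its derivative
times `sinh t` is the algebraic factor on the right, and the logarithm on the right is `2 ψ t`.
-/

open Set

theorem artanh_eq_real_artanh {x : ℝ} (hx : x ∈ Icc (-1) 1) :
    _root_.artanh x = Real.artanh x := by
  rw [Real.artanh_eq_half_log hx, _root_.artanh]
  ring

theorem hasDerivAt_artanh {x : ℝ} (hx : x ∈ Ioo (-1) 1) :
    HasDerivAt _root_.artanh (1 / (1 - x ^ 2)) x := by
  obtain ⟨h₁, h₂⟩ := hx
  have hnum : HasDerivAt (fun y ↦ 1 + y) 1 x := by simpa using (hasDerivAt_id x).const_add 1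
  have hden : HasDerivAt (fun y ↦ 1 - y) (-1) x := by simpa using (hasDerivAt_id x).const_sub 1
  have hq : HasDerivAt (fun y ↦ (1 + y) / (1 - y)) (2 / (1 - x) ^ 2) x := by
    refine (hnum.div hden (by linarith)).congr_deriv ?_
    ring
  refine ((hq.log (div_pos (by linarith) (by linarith)).ne').div_const 2).congr_deriv ?_
  have h₃ : 1 - x ≠ 0 := by linarith
  have h₄ : 1 + x ≠ 0 := by linarith
  have h₅ : 1 - x ^ 2 ≠ 0 := by nlinarith
  field_simp
  ring

theorem ContinuousOn.artanh {f : ℝ → ℝ} {s : Set ℝ} (hf : ContinuousOn f s)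
    (h : ∀ x ∈ s, f x ∈ Ioo (-1) 1) : ContinuousOn (fun x ↦ _root_.artanh (f x)) s :=
  fun x hx ↦ (hasDerivAt_artanh (h x hx)).continuousAt.comp_continuousWithinAt (hf x hx)

theorem sinh_artanh_mul_cosh_artanh {x : ℝ} (hx : x ∈ Ioo (-1) 1) :
    sinh (_root_.artanh x) * cosh (_root_.artanh x) = x / (1 - x ^ 2) := by
  have h : 0 ≤ 1 - x ^ 2 := by nlinarith [hx.1, hx.2]
  rw [artanh_eq_real_artanh (Ioo_subset_Icc_self hx), sinh_artanh hx, cosh_artanh hx,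
    div_mul_div_comm, mul_one, mul_self_sqrt h]

theorem two_mul_artanh_div {x y : ℝ} (hy : y ≠ 0) :
    2 * _root_.artanh (x / y) = log ((y + x) / (y - x)) := by
  have h₁ : 1 + x / y = (y + x) / y := by field_simp
  have h₂ : 1 - x / y = (y - x) / y := by field_simp
  rw [_root_.artanh, h₁, h₂, div_div_div_cancel_right₀ hy]
  ring

theorem hasDerivAt_tanh (x : ℝ) : HasDerivAt tanh (1 / cosh x ^ 2) x := by
  have h := (hasDerivAt_sinh x).div (hasDerivAt_cosh x) (cosh_pos x).ne'
  rw [show sinh / cosh = tanh from funext fun y ↦ (tanh_eq_sinh_div_cosh y).symm] at h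
  refine h.congr_deriv ?_
  rw [← cosh_sq_sub_sinh_sq x]
  ring

theorem integral_cosh_sq (a b : ℝ) :
    ∫ x in a..b, cosh x ^ 2 = (sinh b * cosh b - sinh a * cosh a + b - a) / 2 := by
  have h (x : ℝ) : HasDerivAt (fun y ↦ (sinh y * cosh y + y) / 2) (cosh x ^ 2) x := by
    have h' := (((hasDerivAt_sinh x).mul (hasDerivAt_cosh x)).add (hasDerivAt_id x)).div_const 2
    refine h'.congr_deriv ?_
    linear_combination (-1 / 2 : ℝ) * cosh_sq x
  rw [integral_eq_sub_of_hasDerivAt (fun x _ ↦ h x)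
    ((by fun_prop : Continuous _).intervalIntegrable _ _)]
  ring

theorem hasDerivAt_sinh_mul_artanh_mul_sinh {k y : ℝ} (hy : k * sinh y ∈ Ioo (-1) 1) :
    HasDerivAt (fun y ↦ sinh y * _root_.artanh (k * sinh y) / 2)
      (∫ z in 0.._root_.artanh (k * sinh y), cosh z ^ 2 * cosh y) y := by
  have hψ := (hasDerivAt_artanh hy).comp y ((hasDerivAt_sinh y).const_mul k)
  refine (((hasDerivAt_sinh y).mul hψ).div_const 2).congr_deriv ?_
  have h : 1 - (k * sinh y) ^ 2 ≠ 0 := by nlinarith [hy.1, hy.2]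
  rw [intervalIntegral.integral_mul_const, integral_cosh_sq, sinh_artanh_mul_cosh_artanh hy,
    sinh_zero, Function.comp_apply]
  field_simp
  ring

theorem integral_integral_cosh_sq_mul_cosh {k t : ℝ}
    (h : ∀ y ∈ uIcc 0 t, k * sinh y ∈ Ioo (-1) 1) :
    ∫ y in 0..t, ∫ z in 0.._root_.artanh (k * sinh y), cosh z ^ 2 * cosh y =
      sinh t * _root_.artanh (k * sinh t) / 2 := by
  have hint : IntervalIntegrable
      (fun y ↦ ∫ z in 0.._root_.artanh (k * sinh y), cosh z ^ 2 * cosh y) volume 0 t := by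
    have hψ : ContinuousOn (fun y ↦ _root_.artanh (k * sinh y)) (uIcc 0 t) :=
      ContinuousOn.artanh (by fun_prop) h
    simp only [intervalIntegral.integral_mul_const, integral_cosh_sq]
    exact ContinuousOn.intervalIntegrable (by fun_prop)
  rw [integral_eq_sub_of_hasDerivAt
    (fun y hy ↦ hasDerivAt_sinh_mul_artanh_mul_sinh (h y hy)) hint]
  simp

theorem div_sinh_mul_sinh_mem_Ioo {u b t : ℝ} (hu : |u| < 1) (ht : t ∈ uIcc 0 b) :
    u / sinh b * sinh t ∈ Ioo (-1) 1 := by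
  rw [mem_Ioo, ← abs_lt]
  have hst : |sinh t| ≤ |sinh b| := by
    rw [abs_sinh, abs_sinh, sinh_le_sinh]
    simpa using abs_sub_left_of_mem_uIcc ht
  calc |u / sinh b * sinh t| = |u| * (|sinh t| / |sinh b|) := by rw [abs_mul, abs_div]; ring
    _ ≤ |u| * 1 := by gcongr; exact div_le_one_of_le₀ hst (abs_nonneg _)
    _ < 1 := by linarith

theorem hasDerivAt_arsinh_div_mul_tanh {p q : ℝ} (hq : 0 < q) (t : ℝ) :
    HasDerivAt (fun t ↦ arsinh (p / q * tanh t))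
      (p / (cosh t * √(q ^ 2 * cosh t ^ 2 + p ^ 2 * sinh t ^ 2))) t := by
  have hD : 0 < q ^ 2 * cosh t ^ 2 + p ^ 2 * sinh t ^ 2 := by positivity
  have hsqrt : √(1 + (p / q * tanh t) ^ 2) =
      √(q ^ 2 * cosh t ^ 2 + p ^ 2 * sinh t ^ 2) / (q * cosh t) := by
    rw [← sqrt_sq (by positivity : 0 ≤ q * cosh t), ← sqrt_div hD.le, tanh_eq_sinh_div_cosh]
    congr 1
    field_simp
  refine ((hasDerivAt_arsinh _).comp t ((hasDerivAt_tanh t).const_mul _)).congr_deriv ?_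
  rw [hsqrt]
  field_simp

theorem integral_comp_eq_integral_mul_deriv_of_leftInvOn {K X X' φ : ℝ → ℝ} {a b : ℝ}
    (hX : ∀ t ∈ uIcc a b, HasDerivAt X (X' t) t) (hX' : ContinuousOn X' (uIcc a b))
    (hφ : ContinuousOn φ (X '' uIcc a b)) (hφX : LeftInvOn φ X (uIcc a b))
    (hK : ContinuousOn K (uIcc a b)) :
    ∫ x in X a..X b, K (φ x) = ∫ t in a..b, K t * X' t := by
  have hmaps : MapsTo φ (X '' uIcc a b) (uIcc a b) := by
    rintro _ ⟨t, ht, rfl⟩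
    rwa [hφX ht]
  refine (integral_comp_mul_deriv' hX hX' (hK.comp hφ hmaps)).symm.trans ?_
  exact integral_congr fun t ht ↦ by simp [hφX ht]

theorem integral_comp_artanh_div_mul_sinh {p q b : ℝ} {K : ℝ → ℝ} (hp : p ≠ 0)
    (hq : 0 < q) (hK : ContinuousOn K (uIcc 0 b)) :
    ∫ x in 0..arsinh (p / q * tanh b), K (_root_.artanh (q / p * sinh x)) =
      ∫ t in 0..b, K t * (p / (cosh t * √(q ^ 2 * cosh t ^ 2 + p ^ 2 * sinh t ^ 2))) := by
  have hmX (t : ℝ) : q / p * sinh (arsinh (p / q * tanh t)) = tanh t := by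
    rw [sinh_arsinh]
    field_simp
  convert integral_comp_eq_integral_mul_deriv_of_leftInvOn
    (X := fun t ↦ arsinh (p / q * tanh t)) (φ := fun x ↦ _root_.artanh (q / p * sinh x))
    (fun t _ ↦ hasDerivAt_arsinh_div_mul_tanh hq t)
    (continuous_const.div (by fun_prop) fun t ↦ by positivity).continuousOn ?_ ?_ hK using 2
  · simp
  · refine ContinuousOn.artanh (by fun_prop) ?_
    rintro _ ⟨t, -, rfl⟩
    rw [hmX]
    exact ⟨neg_one_lt_tanh t, tanh_lt_one t⟩
  · intro t _
    beta_reduce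
    rw [hmX, artanh_eq_real_artanh ⟨(neg_one_lt_tanh t).le, (tanh_lt_one t).le⟩,
      Real.artanh_tanh]

theorem orthosceme_volume_general (a b c : ℝ) (ha : 0 < a) (hb : 0 < b) :
    (∫ x in (0:ℝ)..a,
        ∫ y in (0:ℝ)..(_root_.artanh ((Real.tanh b / Real.sinh a) * Real.sinh x)),
          ∫ z in (0:ℝ)..(_root_.artanh ((Real.tanh c / Real.sinh b) * Real.sinh y)),
            Real.cosh z ^ 2 * Real.cosh y) =
      (1 / 4) * ∫ l in (0:ℝ)..b,
        (Real.tanh l * Real.sinh a /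
            Real.sqrt (Real.tanh b ^ 2 * Real.cosh l ^ 2 + Real.sinh a ^ 2 * Real.sinh l ^ 2)) *
          Real.log ((Real.sinh b + Real.tanh c * Real.sinh l) /
            (Real.sinh b - Real.tanh c * Real.sinh l)) := by
  have hsb : sinh b ≠ 0 := (sinh_pos_iff.mpr hb).ne'
  have htb : 0 < tanh b := by
    rw [tanh_eq_sinh_div_cosh]
    exact div_pos (sinh_pos_iff.mpr hb) (cosh_pos b)
  have hk (t : ℝ) (ht : t ∈ uIcc 0 b) : tanh c / sinh b * sinh t ∈ Ioo (-1) 1 :=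
    div_sinh_mul_sinh_mem_Ioo (abs_tanh_lt_one c) ht
  have hinner (t : ℝ) (ht : t ∈ uIcc 0 b) :
      ∫ y in 0..t, ∫ z in 0.._root_.artanh (tanh c / sinh b * sinh y), cosh z ^ 2 * cosh y =
        sinh t * _root_.artanh (tanh c / sinh b * sinh t) / 2 :=
    integral_integral_cosh_sq_mul_cosh fun y hy ↦ hk y (uIcc_subset_uIcc_left ht hy)
  have hcont : ContinuousOn (fun t ↦ sinh t * _root_.artanh (tanh c / sinh b * sinh t) / 2)
      (uIcc 0 b) :=
    (ContinuousOn.mul (by fun_prop) (ContinuousOn.artanh (by fun_prop) hk)).div_const 2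
  have hsub := integral_comp_artanh_div_mul_sinh (sinh_pos_iff.mpr ha).ne' htb
    (hcont.congr fun t ht ↦ hinner t ht)
  rw [div_mul_cancel₀ _ htb.ne', arsinh_sinh] at hsub
  rw [hsub, ← intervalIntegral.integral_const_mul]
  refine integral_congr fun t ht ↦ ?_
  rw [hinner t ht, ← two_mul_artanh_div hsb, mul_div_right_comm (tanh c), tanh_eq_sinh_div_cosh t]
  ring

/-- Theorem 1 of the paper: the volume (curvature `k = 1`) of a hyperbolic orthosceme
with edge lengths `a`, `b`, `c` (edge `a ⊥ b`, edge `c ⊥ plane(a,b)`), expressed in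
hyperbolic orthogonal coordinates as a triple integral, equals the single integral on
the right. -/
theorem orthosceme_volume (a b c : ℝ) (ha : 0 < a) (hb : 0 < b) (hc : 0 < c) :
    (∫ x in (0:ℝ)..a,
        ∫ y in (0:ℝ)..(_root_.artanh ((Real.tanh b / Real.sinh a) * Real.sinh x)),
          ∫ z in (0:ℝ)..(_root_.artanh ((Real.tanh c / Real.sinh b) * Real.sinh y)),
            Real.cosh z ^ 2 * Real.cosh y) =
      (1 / 4) * ∫ l in (0:ℝ)..b,
        (Real.tanh l * Real.sinh a /
            Real.sqrt (Real.tanh b ^ 2 * Real.cosh l ^ 2 + Real.sinh a ^ 2 * Real.sinh l ^ 2)) *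
          Real.log ((Real.sinh b + Real.tanh c * Real.sinh l) /
            (Real.sinh b - Real.tanh c * Real.sinh l)) :=
  orthosceme_volume_general a b c ha hb
end

section
/- Let b, c > 0 and 0 ≤ L ≤ b be real numbers. Then ∫_0^L sinh( log((sinh(b) + tanh(c)·sinh(y)) / (sinh(b) − tanh(c)·sinh(y))) ) · cosh(y) dy = −(sinh(b)/tanh(c)) · log(1 − (tanh²(c)/sinh²(b)) · sinh²(L)). -/
/-! Since `sinh (log ((a + x) / (a - x))) = 2 a x / (a² - x²)`, substituting
`x = tanh c · sinh y` turns the integrand into `(sinh b / tanh c) · 2 x x' / (sinh² b - x²)`,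
the derivative of `-(sinh b / tanh c) · log (1 - x² / sinh² b)`. -/

open MeasureTheory Real intervalIntegral Set

theorem Real.sinh_log_div_sub {a x : ℝ} (h₁ : 0 < a + x) (h₂ : 0 < a - x) :
    sinh (log ((a + x) / (a - x))) = 2 * a * x / (a ^ 2 - x ^ 2) := by
  have hsq : a ^ 2 - x ^ 2 ≠ 0 := by nlinarith
  rw [sinh_log (div_pos h₁ h₂)]
  field_simp
  ring

theorem HasDerivAt.neg_log_one_sub_sq_div {f : ℝ → ℝ} {f' a y : ℝ} (hf : HasDerivAt f f' y)
    (hfa : |f y| < a) :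
    HasDerivAt (fun x => -Real.log (1 - f x ^ 2 / a ^ 2)) (2 * f y * f' / (a ^ 2 - f y ^ 2)) y := by
  have ha : 0 < a := (abs_nonneg _).trans_lt hfa
  have hsq : f y ^ 2 < a ^ 2 := sq_lt_sq' (abs_lt.mp hfa).1 (abs_lt.mp hfa).2
  have hpos : 0 < 1 - f y ^ 2 / a ^ 2 := by
    rw [sub_pos, div_lt_one (by positivity)]
    exact hsq
  have hsq' : a ^ 2 - f y ^ 2 ≠ 0 := by linarith
  refine (((((hf.pow 2).div_const (a ^ 2)).const_sub 1).log hpos.ne').neg).congr_deriv ?_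
  simp only [Pi.pow_apply]
  field_simp
  ring

theorem integral_sinh_log_div_sub_mul_deriv {f f' : ℝ → ℝ} {a u v : ℝ}
    (hf : ∀ x ∈ uIcc u v, HasDerivAt f (f' x) x) (hf' : ContinuousOn f' (uIcc u v))
    (hfa : ∀ x ∈ uIcc u v, |f x| < a) :
    ∫ x in u..v, sinh (log ((a + f x) / (a - f x))) * f' x =
      a * (log (1 - f u ^ 2 / a ^ 2) - log (1 - f v ^ 2 / a ^ 2)) := by
  have hden : ∀ x ∈ uIcc u v, a ^ 2 - f x ^ 2 ≠ 0 := fun x hx => by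
    have := abs_lt.mp (hfa x hx)
    nlinarith
  have hpointwise : EqOn (fun x => sinh (log ((a + f x) / (a - f x))) * f' x)
      (fun x => a * (2 * f x * f' x / (a ^ 2 - f x ^ 2))) (uIcc u v) := fun x hx => by
    have := abs_lt.mp (hfa x hx)
    dsimp only
    rw [Real.sinh_log_div_sub (by linarith) (by linarith)]
    field_simp
  have hcont : ContinuousOn f (uIcc u v) := fun x hx =>
    (hf x hx).continuousAt.continuousWithinAt
  rw [integral_congr hpointwise, intervalIntegral.integral_const_mul,
    integral_eq_sub_of_hasDerivAt
      (fun x hx => HasDerivAt.neg_log_one_sub_sq_div (hf x hx) (hfa x hx))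
      (((continuousOn_const.mul hcont).mul hf').div
        (continuousOn_const.sub (hcont.pow 2)) hden).intervalIntegrable]
  ring

theorem orthosceme_second_integral_general (b c L : ℝ) (hb : 0 < b)
    (hL0 : 0 ≤ L) (hLb : L ≤ b) :
    (∫ y in (0:ℝ)..L,
        Real.sinh (Real.log ((Real.sinh b + Real.tanh c * Real.sinh y) /
            (Real.sinh b - Real.tanh c * Real.sinh y))) * Real.cosh y) =
      -(Real.sinh b / Real.tanh c) *
        Real.log (1 - (Real.tanh c ^ 2 / Real.sinh b ^ 2) * Real.sinh L ^ 2) := by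
  have hS : 0 < sinh b := sinh_pos_iff.mpr hb
  rcases eq_or_ne (tanh c) 0 with ht | ht
  · simp [ht, hS.ne']
  have hbound : ∀ y ∈ uIcc 0 L, |tanh c * sinh y| < sinh b := fun y hy => by
    rw [uIcc_of_le hL0] at hy
    have hsinh : |sinh y| ≤ sinh b := by
      rw [abs_of_nonneg (sinh_nonneg_iff.mpr hy.1)]
      exact sinh_le_sinh.mpr (hy.2.trans hLb)
    calc |tanh c * sinh y| = |tanh c| * |sinh y| := abs_mul _ _
      _ ≤ |tanh c| * sinh b := by gcongr
      _ < 1 * sinh b := by gcongr; exact abs_tanh_lt_one c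
      _ = sinh b := one_mul _
  calc _ = (tanh c)⁻¹ * ∫ y in (0:ℝ)..L,
        sinh (log ((sinh b + tanh c * sinh y) / (sinh b - tanh c * sinh y))) *
          (tanh c * cosh y) := by
        rw [← intervalIntegral.integral_const_mul]
        congr 1 with y
        field_simp
    _ = _ := by
        rw [integral_sinh_log_div_sub_mul_deriv
          (fun y _ => (hasDerivAt_sinh y).const_mul (tanh c))
          (continuous_const.mul continuous_cosh).continuousOn hbound, sinh_zero, mul_zero,
          zero_pow two_ne_zero, zero_div, sub_zero, log_one, mul_pow, mul_div_right_comm]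
        ring

/-- The 'second integral' (denoted II) evaluated in the proof of the orthosceme
volume formula (Theorem 1). -/
theorem orthosceme_second_integral (b c L : ℝ) (hb : 0 < b) (hc : 0 < c)
    (hL0 : 0 ≤ L) (hLb : L ≤ b) :
    (∫ y in (0:ℝ)..L,
        Real.sinh (Real.log ((Real.sinh b + Real.tanh c * Real.sinh y) /
            (Real.sinh b - Real.tanh c * Real.sinh y))) * Real.cosh y) =
      -(Real.sinh b / Real.tanh c) *
        Real.log (1 - (Real.tanh c ^ 2 / Real.sinh b ^ 2) * Real.sinh L ^ 2) :=
  orthosceme_second_integral_general b c L hb hL0 hLb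
end

section
/- Let b, c > 0 and 0 ≤ L ≤ b be real numbers. Then ∫_0^L log((sinh(b) + tanh(c)·sinh(y)) / (sinh(b) − tanh(c)·sinh(y))) · cosh(y) dy = sinh(L) · log((sinh(b) + tanh(c)·sinh(L)) / (sinh(b) − tanh(c)·sinh(L))) + (sinh(b)/tanh(c)) · log(1 − (tanh²(c)/sinh²(b)) · sinh²(L)). -/
open MeasureTheory Real intervalIntegral

/-! With `S = sinh b`, `t = tanh c` and `u = sinh y` the integral is `∫₀^{sinh L} f(u) du` for
`f(u) = log ((S + t u) / (S - t u))`. Integrating by parts, `u f'(u) = 2 S t u / (S² - t² u²)`, whose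
primitive is `-(S / t) log (1 - t² u² / S²)`. Since `|tanh c| < 1` and `|y| ≤ b`, `|t u| < S` on the
whole range, so the primitive is smooth there. -/

noncomputable def logRatioPrimitive (S t u : ℝ) : ℝ :=
  u * log ((S + t * u) / (S - t * u)) + S / t * log (1 - t ^ 2 / S ^ 2 * u ^ 2)

theorem hasDerivAt_logRatioPrimitive {S t u : ℝ} (hS : S ≠ 0) (hp : S + t * u ≠ 0)
    (hm : S - t * u ≠ 0) :
    HasDerivAt (logRatioPrimitive S t) (log ((S + t * u) / (S - t * u))) u := by
  rcases eq_or_ne t 0 with rfl | ht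
  · -- `S / 0 = 0`, so the primitive degenerates to `u * log (S / S) = 0`.
    unfold logRatioPrimitive
    simpa [hS] using hasDerivAt_const u (0 : ℝ)
  have hsq_sub : S ^ 2 - t ^ 2 * u ^ 2 ≠ 0 := by
    rw [show S ^ 2 - t ^ 2 * u ^ 2 = (S + t * u) * (S - t * u) by ring]
    exact mul_ne_zero hp hm
  have hq : 1 - t ^ 2 / S ^ 2 * u ^ 2 ≠ 0 := by
    field_simp
    exact div_ne_zero hsq_sub (pow_ne_zero 2 hS)
  have hid := hasDerivAt_id' u
  have hratio := (((hid.const_mul t).const_add S).div ((hid.const_mul t).const_sub S) hm).log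
    (div_ne_zero hp hm)
  have hsq := (((hid.pow 2).const_mul (t ^ 2 / S ^ 2)).const_sub 1).log hq
  refine ((hid.mul hratio).add (hsq.const_mul (S / t))).congr_deriv ?_
  simp only [Pi.div_apply, Pi.pow_apply]
  field_simp
  ring

theorem abs_mul_sinh_lt_sinh {t b y : ℝ} (ht : |t| < 1) (hb : 0 < b) (hy : |y| ≤ b) :
    |t * sinh y| < sinh b := calc
  |t * sinh y| = |t| * sinh |y| := by rw [abs_mul, abs_sinh]
  _ ≤ |t| * sinh b := by gcongr; exact sinh_le_sinh.mpr hy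
  _ < sinh b := mul_lt_of_lt_one_left (sinh_pos_iff.mpr hb) ht

theorem orthosceme_first_integral_general (b c L : ℝ) (hb : 0 < b)
    (hL0 : 0 ≤ L) (hLb : L ≤ b) :
    (∫ y in (0:ℝ)..L,
        Real.log ((Real.sinh b + Real.tanh c * Real.sinh y) /
            (Real.sinh b - Real.tanh c * Real.sinh y)) * Real.cosh y) =
      Real.sinh L *
          Real.log ((Real.sinh b + Real.tanh c * Real.sinh L) /
            (Real.sinh b - Real.tanh c * Real.sinh L)) +
        (Real.sinh b / Real.tanh c) *
          Real.log (1 - (Real.tanh c ^ 2 / Real.sinh b ^ 2) * Real.sinh L ^ 2) := by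
  have hne : ∀ y ∈ Set.uIcc 0 L,
      sinh b + tanh c * sinh y ≠ 0 ∧ sinh b - tanh c * sinh y ≠ 0 := by
    intro y hy
    rw [Set.uIcc_of_le hL0] at hy
    have hlt := abs_lt.mp <| abs_mul_sinh_lt_sinh (abs_tanh_lt_one c) hb <| by
      rw [abs_of_nonneg hy.1]; exact hy.2.trans hLb
    constructor <;> linarith
  have hderiv : ∀ y ∈ Set.uIcc 0 L, HasDerivAt (logRatioPrimitive (sinh b) (tanh c) ∘ sinh)
      (log ((sinh b + tanh c * sinh y) / (sinh b - tanh c * sinh y)) * cosh y) y := fun y hy =>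
    (hasDerivAt_logRatioPrimitive (sinh_pos_iff.mpr hb).ne' (hne y hy).1 (hne y hy).2).comp y
      (hasDerivAt_sinh y)
  have hcont : ContinuousOn (fun y =>
      log ((sinh b + tanh c * sinh y) / (sinh b - tanh c * sinh y)) * cosh y) (Set.uIcc 0 L) := by
    fun_prop (disch := grind)
  rw [integral_eq_sub_of_hasDerivAt hderiv hcont.intervalIntegrable]
  simp [logRatioPrimitive]

/-- The 'first integral' evaluated via integration by parts in the proof of the
orthosceme volume formula (Theorem 1). -/
theorem orthosceme_first_integral (b c L : ℝ) (hb : 0 < b) (hc : 0 < c)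
    (hL0 : 0 ≤ L) (hLb : L ≤ b) :
    (∫ y in (0:ℝ)..L,
        Real.log ((Real.sinh b + Real.tanh c * Real.sinh y) /
            (Real.sinh b - Real.tanh c * Real.sinh y)) * Real.cosh y) =
      Real.sinh L *
          Real.log ((Real.sinh b + Real.tanh c * Real.sinh L) /
            (Real.sinh b - Real.tanh c * Real.sinh L)) +
        (Real.sinh b / Real.tanh c) *
          Real.log (1 - (Real.tanh c ^ 2 / Real.sinh b ^ 2) * Real.sinh L ^ 2) :=
  orthosceme_first_integral_general b c L hb hL0 hLb
end

section
/- Let b, c > 0 be fixed real numbers. Then, as a → ∞, the quantity (1/4)·∫_0^b (tanh(λ)·sinh(a)/√(tanh²(b)·cosh²(λ) + sinh²(a)·sinh²(λ))) · log((sinh(b) + tanh(c)·sinh(λ))/(sinh(b) − tanh(c)·sinh(λ))) dλ tends to (1/4)·∫_0^b (1/cosh(λ)) · log((sinh(b) + tanh(c)·sinh(λ))/(sinh(b) − tanh(c)·sinh(λ))) dλ. -/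
/-!
The integrand is `g_a(λ) · L(λ)`, where `L` is the logarithmic factor and
`g_a(λ) = tanh λ · sinh a / √(tanh² b · cosh² λ + sinh² a · sinh² λ)`.
Since `|tanh λ| ≤ |sinh λ|`, the weight satisfies `|g_a| ≤ 1`, and as `sinh a → ∞` it tends to
`tanh λ / sinh λ = 1 / cosh λ` for `λ > 0`. Because `|tanh c| < 1`, the factor `L` is continuous
on `[0, b]`, so `|L|` is an integrable dominating function and dominated convergence applies.
-/

open Real Filter MeasureTheory intervalIntegral Set Topology

namespace Real

theorem abs_tanh_le_abs_sinh (x : ℝ) : |tanh x| ≤ |sinh x| := by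
  rw [tanh_eq_sinh_div_cosh, abs_div, abs_of_pos (cosh_pos x)]
  exact div_le_self (abs_nonneg _) (one_le_cosh x)

theorem tendsto_sinh_atTop : Tendsto sinh atTop atTop :=
  tendsto_atTop_mono' atTop ((eventually_ge_atTop 0).mono fun _ hx => self_le_sinh_iff.2 hx)
    tendsto_id

end Real

theorem abs_mul_div_sqrt_add_mul_sq_le_one {t s x r : ℝ} (hr : 0 ≤ r) (hts : |t| ≤ |s|) :
    |t * x / √(r + x ^ 2 * s ^ 2)| ≤ 1 := by
  rw [abs_div, abs_of_nonneg (sqrt_nonneg _)]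
  refine div_le_one_of_le₀ ?_ (sqrt_nonneg _)
  calc |t * x| ≤ |x * s| := by rw [abs_mul, abs_mul, mul_comm]; gcongr
    _ = √((x * s) ^ 2) := (sqrt_sq_eq_abs _).symm
    _ ≤ √(r + x ^ 2 * s ^ 2) := sqrt_le_sqrt (by rw [mul_pow]; linarith)

theorem tendsto_mul_div_sqrt_add_mul_sq_atTop (t r : ℝ) {s : ℝ} (hs : 0 < s) :
    Tendsto (fun x => t * x / √(r + x ^ 2 * s ^ 2)) atTop (𝓝 (t / s)) := by
  have hlim : Tendsto (fun x : ℝ => t / √(r / x ^ 2 + s ^ 2)) atTop (𝓝 (t / s)) := by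
    have hr : Tendsto (fun x : ℝ => r / x ^ 2) atTop (𝓝 0) :=
      tendsto_const_nhds.div_atTop (tendsto_pow_atTop two_ne_zero)
    have hroot : Tendsto (fun x : ℝ => √(r / x ^ 2 + s ^ 2)) atTop (𝓝 s) := by
      have h := (hr.add_const (s ^ 2)).sqrt
      rwa [zero_add, sqrt_sq hs.le] at h
    exact tendsto_const_nhds.div hroot hs.ne'
  refine hlim.congr' ((eventually_gt_atTop 0).mono fun x hx => ?_)
  show _ = t * x / _
  have hsplit : r + x ^ 2 * s ^ 2 = x ^ 2 * (r / x ^ 2 + s ^ 2) := by field_simp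
  rw [hsplit, sqrt_mul (sq_nonneg x), sqrt_sq hx.le, mul_comm x, mul_div_mul_right _ _ hx.ne']

theorem intervalIntegrable_log_sinh_add_div_sinh_sub {b k : ℝ} (hb : 0 < b) (hk : |k| < 1) :
    IntervalIntegrable (fun l => log ((sinh b + k * sinh l) / (sinh b - k * sinh l)))
      volume 0 b := by
  have hsmall : ∀ l ∈ uIcc 0 b, |k * sinh l| < sinh b := by
    intro l hl
    rw [uIcc_of_le hb.le] at hl
    calc |k * sinh l| = |k| * sinh l := by rw [abs_mul, abs_of_nonneg (sinh_nonneg_iff.2 hl.1)]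
      _ ≤ |k| * sinh b := by gcongr; exact sinh_le_sinh.2 hl.2
      _ < sinh b := mul_lt_of_lt_one_left (sinh_pos_iff.2 hb) hk
  refine ContinuousOn.intervalIntegrable (ContinuousOn.log ?_ fun l hl => ?_)
  · refine ContinuousOn.div (by fun_prop) (by fun_prop) fun l hl => ?_
    linarith [(abs_lt.1 (hsmall l hl)).2]
  · obtain ⟨hlo, hhi⟩ := abs_lt.1 (hsmall l hl)
    exact div_ne_zero (by linarith) (by linarith)

theorem orthosceme_volume_limit_a_general (b c : ℝ) (hb : 0 < b) :
    Filter.Tendsto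
      (fun a : ℝ => (1 / 4) * ∫ l in (0:ℝ)..b,
        (Real.tanh l * Real.sinh a /
            Real.sqrt (Real.tanh b ^ 2 * Real.cosh l ^ 2 + Real.sinh a ^ 2 * Real.sinh l ^ 2)) *
          Real.log ((Real.sinh b + Real.tanh c * Real.sinh l) /
            (Real.sinh b - Real.tanh c * Real.sinh l)))
      Filter.atTop
      (nhds ((1 / 4) * ∫ l in (0:ℝ)..b,
        (1 / Real.cosh l) *
          Real.log ((Real.sinh b + Real.tanh c * Real.sinh l) /
            (Real.sinh b - Real.tanh c * Real.sinh l)))) := by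
  have hL := intervalIntegrable_log_sinh_add_div_sinh_sub hb (abs_tanh_lt_one c)
  refine (tendsto_integral_filter_of_dominated_convergence _ ?_ ?_ hL.norm ?_).const_mul _
  · refine .of_forall fun a => Measurable.aestronglyMeasurable ?_
    simp only [tanh_eq_sinh_div_cosh]
    fun_prop
  · refine .of_forall fun a => .of_forall fun l _ => ?_
    rw [norm_mul]
    exact mul_le_of_le_one_left (norm_nonneg _)
      (abs_mul_div_sqrt_add_mul_sq_le_one (by positivity) (abs_tanh_le_abs_sinh l))
  · refine .of_forall fun l hl => Tendsto.mul_const _ ?_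
    have hl : 0 < l := (uIoc_of_le hb.le ▸ hl).1
    have hweight : tanh l / sinh l = 1 / cosh l := by
      rw [tanh_eq_sinh_div_cosh]; field_simp [(sinh_pos_iff.2 hl).ne']
    exact hweight ▸ (tendsto_mul_div_sqrt_add_mul_sq_atTop (tanh l) _ (sinh_pos_iff.2 hl)).comp
      tendsto_sinh_atTop

/-- Corollary to Theorem 1: letting the edge length `a` of the orthosceme tend to
infinity, the volume tends to the volume of an orthosceme with one ideal vertex. -/
theorem orthosceme_volume_limit_a (b c : ℝ) (hb : 0 < b) (hc : 0 < c) :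
    Filter.Tendsto
      (fun a : ℝ => (1 / 4) * ∫ l in (0:ℝ)..b,
        (Real.tanh l * Real.sinh a /
            Real.sqrt (Real.tanh b ^ 2 * Real.cosh l ^ 2 + Real.sinh a ^ 2 * Real.sinh l ^ 2)) *
          Real.log ((Real.sinh b + Real.tanh c * Real.sinh l) /
            (Real.sinh b - Real.tanh c * Real.sinh l)))
      Filter.atTop
      (nhds ((1 / 4) * ∫ l in (0:ℝ)..b,
        (1 / Real.cosh l) *
          Real.log ((Real.sinh b + Real.tanh c * Real.sinh l) /
            (Real.sinh b - Real.tanh c * Real.sinh l)))) :=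
  orthosceme_volume_limit_a_general b c hb
end

section
/- Let b > 0 be a fixed real number. Then, as c → ∞, the quantity (1/4)·∫_0^b (1/cosh(λ)) · log((sinh(b) + tanh(c)·sinh(λ))/(sinh(b) − tanh(c)·sinh(λ))) dλ tends to (1/4)·∫_0^b (1/cosh(λ)) · log((sinh(b) + sinh(λ))/(sinh(b) − sinh(λ))) dλ, and the limiting integral is finite. -/
/-!
For `0 ≤ λ < b` and `0 ≤ t ≤ 1` the integrand with `tanh c` replaced by `t` lies between `0` and
`log (2 sinh b) - log (b - λ)`, because `1 / cosh λ ≤ 1`, the numerator is at most `2 sinh b` and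
`sinh b - t sinh λ ≥ sinh b - sinh λ ≥ b - λ`. This bound is integrable on `[0, b]` (a shifted
logarithm) and does not depend on `t`, so dominated convergence along `t = tanh c → 1` gives both
the limit and the integrability of the limiting integrand.
-/

open Real Filter MeasureTheory intervalIntegral Set Topology Interval

theorem Real.tanh_nonneg {x : ℝ} (hx : 0 ≤ x) : 0 ≤ tanh x := by
  rw [tanh_eq_sinh_div_cosh]
  exact div_nonneg (sinh_nonneg_iff.2 hx) (cosh_pos x).le

theorem Real.tendsto_tanh_atTop : Tendsto tanh atTop (𝓝 1) := by
  have h : Tendsto (fun x : ℝ => exp (-(2 * x))) atTop (𝓝 0) :=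
    tendsto_exp_neg_atTop_nhds_zero.comp (tendsto_id.const_mul_atTop two_pos)
  have hquot := ((tendsto_const_nhds (x := (1 : ℝ))).sub h).div
    ((tendsto_const_nhds (x := (1 : ℝ))).add h) (by norm_num)
  rw [sub_zero, add_zero, div_one] at hquot
  refine hquot.congr fun x => ?_
  rw [Pi.div_apply, tanh_eq, ← mul_div_mul_left (1 - _) _ (exp_pos x).ne', mul_sub, mul_add,
    mul_one, ← exp_add]
  ring_nf

theorem Real.sub_le_sinh_sub_sinh {x y : ℝ} (h : y ≤ x) : x - y ≤ sinh x - sinh y := by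
  linarith [sinh_sub_id_strictMono.monotone h]

noncomputable def orthoscemeIntegrand (b t l : ℝ) : ℝ :=
  1 / cosh l * log ((sinh b + t * sinh l) / (sinh b - t * sinh l))

theorem measurable_orthoscemeIntegrand (b t : ℝ) : Measurable (orthoscemeIntegrand b t) := by
  unfold orthoscemeIntegrand
  fun_prop

theorem continuousAt_orthoscemeIntegrand {b t l : ℝ} (h : |t * sinh l| < sinh b) :
    ContinuousAt (fun s => orthoscemeIntegrand b s l) t := by
  have hden : sinh b - t * sinh l ≠ 0 := by linarith [le_abs_self (t * sinh l)]
  have hnum : sinh b + t * sinh l ≠ 0 := by linarith [neg_abs_le (t * sinh l)]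
  unfold orthoscemeIntegrand
  exact continuousAt_const.mul
    (((continuousAt_const.add (continuousAt_id.mul continuousAt_const)).div
      (continuousAt_const.sub (continuousAt_id.mul continuousAt_const)) hden).log
      (div_ne_zero hnum hden))

theorem abs_orthoscemeIntegrand_le {b t l : ℝ} (ht : t ∈ Icc 0 1) (hl : l ∈ Ico 0 b) :
    |orthoscemeIntegrand b t l| ≤ log (2 * sinh b) - log (b - l) := by
  obtain ⟨ht0, ht1⟩ := ht
  obtain ⟨hl0, hlb⟩ := hl
  have hsl : 0 ≤ sinh l := sinh_nonneg_iff.2 hl0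
  have hts : t * sinh l ≤ sinh l := mul_le_of_le_one_left hsl ht1
  have hts0 : 0 ≤ t * sinh l := mul_nonneg ht0 hsl
  have hsinh : sinh l < sinh b := sinh_lt_sinh.2 hlb
  have hgap : b - l ≤ sinh b - sinh l := sub_le_sinh_sub_sinh hlb.le
  have hbl : 0 < b - l := sub_pos.2 hlb
  have hden : 0 < sinh b - t * sinh l := by linarith
  have hlog0 : 0 ≤ log ((sinh b + t * sinh l) / (sinh b - t * sinh l)) :=
    log_nonneg ((one_le_div hden).2 (by linarith))
  have hlog_le : log ((sinh b + t * sinh l) / (sinh b - t * sinh l))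
      ≤ log (2 * sinh b) - log (b - l) := by
    rw [← log_div (by linarith) hbl.ne']
    exact log_le_log (div_pos (by linarith) hden)
      (div_le_div₀ (by linarith) (by linarith) hbl (by linarith))
  have hcosh : 1 / cosh l ≤ 1 := (div_le_one (cosh_pos l)).2 (one_le_cosh l)
  rw [orthoscemeIntegrand, abs_of_nonneg (by positivity)]
  exact (mul_le_of_le_one_left hlog0 hcosh).trans hlog_le

theorem ae_abs_orthoscemeIntegrand_le {b t : ℝ} (hb : 0 ≤ b) (ht : t ∈ Icc 0 1) :
    ∀ᵐ l, l ∈ Ι 0 b → |orthoscemeIntegrand b t l| ≤ log (2 * sinh b) - log (b - l) := by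
  filter_upwards [measure_singleton b |> compl_mem_ae_iff.2] with l hl hmem
  rw [uIoc_of_le hb] at hmem
  exact abs_orthoscemeIntegrand_le ht ⟨hmem.1.le, lt_of_le_of_ne hmem.2 hl⟩

theorem intervalIntegrable_log_sub_log_sub (a b x y : ℝ) :
    IntervalIntegrable (fun l => log a - log (b - l)) volume x y := by
  simpa using intervalIntegrable_const.sub
    ((intervalIntegrable_log' (a := b - x) (b := b - y)).comp_sub_left b)

theorem intervalIntegrable_orthoscemeIntegrand {b t : ℝ} (hb : 0 ≤ b) (ht : t ∈ Icc 0 1) :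
    IntervalIntegrable (orthoscemeIntegrand b t) volume 0 b :=
  (intervalIntegrable_log_sub_log_sub _ b 0 b).mono_fun'
    (measurable_orthoscemeIntegrand b t).aestronglyMeasurable
    ((ae_restrict_iff' measurableSet_uIoc).2 (ae_abs_orthoscemeIntegrand_le hb ht))

theorem tendsto_integral_orthoscemeIntegrand {α : Type*} {L : Filter α} [L.IsCountablyGenerated]
    {t : α → ℝ} {b : ℝ} (hb : 0 ≤ b) (ht : Tendsto t L (𝓝 1)) (ht_mem : ∀ᶠ a in L, t a ∈ Icc 0 1) :
    Tendsto (fun a => ∫ l in 0..b, orthoscemeIntegrand b (t a) l) L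
      (𝓝 (∫ l in 0..b, orthoscemeIntegrand b 1 l)) := by
  refine tendsto_integral_filter_of_dominated_convergence _
    (.of_forall fun a => (measurable_orthoscemeIntegrand b (t a)).aestronglyMeasurable)
    (ht_mem.mono fun a => ae_abs_orthoscemeIntegrand_le hb)
    (intervalIntegrable_log_sub_log_sub _ b 0 b) ?_
  filter_upwards [measure_singleton b |> compl_mem_ae_iff.2] with l hl hmem
  rw [uIoc_of_le hb] at hmem
  have hsinh : |1 * sinh l| < sinh b := by
    rw [one_mul, abs_of_nonneg (sinh_nonneg_iff.2 hmem.1.le)]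
    exact sinh_lt_sinh.2 (lt_of_le_of_ne hmem.2 hl)
  exact (continuousAt_orthoscemeIntegrand hsinh).tendsto.comp ht

/-- Corollary to Theorem 1: letting the edge length `c` of an asymptotic orthosceme
(one ideal vertex) tend to infinity yields the volume of an orthosceme with two
ideal vertices; the limiting integral is finite (the logarithmic singularity at
`λ = b` is integrable). -/
theorem orthosceme_volume_limit_c (b : ℝ) (hb : 0 < b) :
    Filter.Tendsto
      (fun c : ℝ => (1 / 4) * ∫ l in (0:ℝ)..b,
        (1 / Real.cosh l) *
          Real.log ((Real.sinh b + Real.tanh c * Real.sinh l) /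
            (Real.sinh b - Real.tanh c * Real.sinh l)))
      Filter.atTop
      (nhds ((1 / 4) * ∫ l in (0:ℝ)..b,
        (1 / Real.cosh l) *
          Real.log ((Real.sinh b + Real.sinh l) / (Real.sinh b - Real.sinh l)))) ∧
    IntervalIntegrable
      (fun l : ℝ => (1 / Real.cosh l) *
        Real.log ((Real.sinh b + Real.sinh l) / (Real.sinh b - Real.sinh l)))
      MeasureTheory.volume 0 b := by
  have htanh : ∀ᶠ c in atTop, tanh c ∈ Icc 0 1 :=
    eventually_ge_atTop 0 |>.mono fun c hc => ⟨tanh_nonneg hc, (tanh_lt_one c).le⟩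
  have hlim := tendsto_integral_orthoscemeIntegrand hb.le tendsto_tanh_atTop htanh
  have hint := intervalIntegrable_orthoscemeIntegrand hb.le (t := 1) (by simp)
  unfold orthoscemeIntegrand at hlim hint
  simp only [one_mul] at hlim hint
  exact ⟨hlim.const_mul _, hint⟩
end
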